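/- Let y = (y_1, ..., y_n) be a vector of n positive integer car lengths. Then every x ∈ PAinv↑_n(y) lies in {1}^{n−χ(y)} × W(y)^{χ(y)}, i.e., its first n−χ(y) entries equal 1 and its remaining χ(y) entries belong to W(y). In particular, |PAinv↑_n(y)| ≤ binom(2^{n−1} + n − 2, n − 1). -/

import Mathlib

/-- Car with preference `pref` and length `len` fits at spot `s`:
`pref ≤ s`, the spots `s, s+1, ..., s+len-1` all lie in the lot `[1, m]`,
and none of them is occupied. -/
def FitsAt (occ : Finset ℕ) (m pref len s : ℕ) : Prop :=
  pref ≤ s ∧ s + len ≤ m + 1 ∧ ∀ t ∈ Finset.Ico s (s + len), t ∉ occ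

/-- The car parks at `s`: `s` is the least spot (≥ its preference) where it fits. -/
def ParksAt (occ : Finset ℕ) (m pref len s : ℕ) : Prop :=
  FitsAt occ m pref len s ∧ ∀ s' < s, ¬ FitsAt occ m pref len s'

/-- Every car in the list of (preference, length) pairs can park, with
cars entering in order, starting from the set `occ` of occupied spots. -/
inductive Park (m : ℕ) : Finset ℕ → List (ℕ × ℕ) → Prop
  | nil (occ : Finset ℕ) : Park m occ []
  | cons (occ : Finset ℕ) (pref len : ℕ) (rest : List (ℕ × ℕ)) (s : ℕ) :
      ParksAt occ m pref len s →
      Park m (occ ∪ Finset.Ico s (s + len)) rest →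
      Park m occ ((pref, len) :: rest)

/-- `x` is a parking assortment for the length vector `y`. -/
def PA (y x : List ℕ) : Prop :=
  x.length = y.length ∧ (∀ v ∈ x, 1 ≤ v ∧ v ≤ y.sum) ∧ Park y.sum ∅ (x.zip y)

/-- `x` is a (permutation) invariant parking assortment for `y`. -/
def PAinv (y x : List ℕ) : Prop :=
  ∀ x' : List ℕ, x.Perm x' → PA y x'

/-- The degree of `x`: the number of entries of `x` different from 1. -/
def deg (x : List ℕ) : ℕ := (x.filter (fun v => v ≠ 1)).length

/-- The characteristic of `y`: the greatest degree over all invariant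
parking assortments for `y`. -/
noncomputable def chi (y : List ℕ) : ℕ := sSup {d | ∃ x, PAinv y x ∧ deg x = d}

/-- The invariant solution set of `y`. -/
def Wset (y : List ℕ) : Set ℕ :=
  {w | PAinv y (List.replicate (y.length - 1) 1 ++ [w])}

/-!
If all arrangements of `x` park, then so do all arrangements of `(1^{n-1}, w)` for each entry
`w` of `x`: a car preferring `1` takes the first free spot, which is exactly where a minimal
remaining entry of `x` would park, so the ones can be simulated by entries of `x`. Hence every
entry of `x` lies in `W(y)`, and a sorted `x` begins with its `n - deg x ≥ n - χ(y)` ones.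

For the count, an invariant `x` contains `1`, and each entry `w` is `1` plus a subset sum of
`y₂, …, yₙ`: with `w` first, car 1 occupies `[w, w + y₁)`, and the cars parking to its left
fill `[1, w)`. So a sorted `x` is `1` followed by a sorted list of `n - 1` values from a set of
at most `2^{n-1}` values, and stars and bars gives the bound.
-/

open Finset

lemma FitsAt.of_pref_le {occ : Finset ℕ} {m u v ℓ s : ℕ} (h : FitsAt occ m v ℓ s)
    (huv : u ≤ v) : FitsAt occ m u ℓ s :=
  ⟨huv.trans h.1, h.2⟩

lemma ParksAt.unique {occ : Finset ℕ} {m p ℓ s s' : ℕ} (h : ParksAt occ m p ℓ s)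
    (h' : ParksAt occ m p ℓ s') : s = s' := by
  by_contra hne
  rcases Nat.lt_or_gt_of_ne hne with hlt | hgt
  · exact h'.2 s hlt h.1
  · exact h.2 s' hgt h'.1

lemma ParksAt.of_pref_le_of_le {occ : Finset ℕ} {m u v ℓ s : ℕ} (h : ParksAt occ m u ℓ s)
    (huv : u ≤ v) (hvs : v ≤ s) : ParksAt occ m v ℓ s :=
  ⟨⟨hvs, h.1.2⟩, fun s' hs' hfit => h.2 s' hs' (hfit.of_pref_le huv)⟩

lemma FitsAt.exists_parksAt {occ : Finset ℕ} {m p ℓ s : ℕ} (h : FitsAt occ m p ℓ s) :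
    ∃ s, ParksAt occ m p ℓ s := by
  classical
  have hex : ∃ s, FitsAt occ m p ℓ s := ⟨s, h⟩
  exact ⟨Nat.find hex, Nat.find_spec hex, fun _ => Nat.find_min hex⟩

lemma ParksAt.eq_pref_of_empty {m p ℓ s : ℕ} (h : ParksAt ∅ m p ℓ s) : s = p := by
  obtain ⟨⟨hps, hsm, -⟩, hmin⟩ := h
  by_contra hne
  exact hmin p (by omega) ⟨le_rfl, by omega, by simp⟩

def ExactFill (m : ℕ) (occ : Finset ℕ) (lens : List ℕ) : Prop :=
  occ ⊆ Icc 1 m ∧ lens.sum + #occ = m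

lemma ExactFill.step {m ℓ p s : ℕ} {occ : Finset ℕ} {lens : List ℕ}
    (h : ExactFill m occ (ℓ :: lens)) (hfit : FitsAt occ m p ℓ s) (hp : 1 ≤ p) :
    ExactFill m (occ ∪ Ico s (s + ℓ)) lens := by
  obtain ⟨hps, hsm, hfree⟩ := hfit
  refine ⟨union_subset h.1 fun t ht => ?_, ?_⟩
  · simp only [mem_Ico, mem_Icc] at ht ⊢
    omega
  · rw [card_union_of_disjoint (disjoint_right.mpr hfree), Nat.card_Ico]
    have := h.2
    simp only [List.sum_cons] at this
    omega

/-- Cars park at or beyond their preference, so in a run that fills the lot exactly, a free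
spot `t` is claimed by a car preferring a spot `≤ t`. -/
lemma Park.exists_pref_le {m : ℕ} {occ : Finset ℕ} {l : List (ℕ × ℕ)} (h : Park m occ l)
    (hfill : ExactFill m occ (l.map Prod.snd)) {t : ℕ} (ht : t ∈ Icc 1 m) (htocc : t ∉ occ) :
    ∃ c ∈ l, c.1 ≤ t := by
  induction h with
  | nil occ =>
    have hocc : occ = Icc 1 m :=
      eq_of_subset_of_card_le hfill.1 (by simpa using hfill.2.ge)
    exact absurd (hocc ▸ ht) htocc
  | cons occ pref len rest s hps _ ih =>
    by_cases hpt : pref ≤ t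
    · exact ⟨(pref, len), List.mem_cons_self, hpt⟩
    · have hs := hps.1.1
      simp only [mem_Icc] at ht
      obtain ⟨c, hc, hct⟩ := ih (hfill.step hps.1 (by omega)) (by simp [htocc]; omega)
      exact ⟨c, List.mem_cons_of_mem _ hc, hct⟩

/-- An occupied spot `b` splits the cars still to come into the cars `t` parking in `[1, b)` and
the cars `u` parking in `(b, m]`, each side having room for its cars. -/
lemma Park.exists_split {m b : ℕ} {occ : Finset ℕ} {l : List (ℕ × ℕ)} (h : Park m occ l)
    (hpref : ∀ c ∈ l, 1 ≤ c.1) (hb : b ∈ occ) :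
    ∃ t u : List ℕ, t.Sublist (l.map Prod.snd) ∧ t.sum + u.sum = (l.map Prod.snd).sum ∧
      t.sum + #(occ ∩ Ico 1 b) ≤ b - 1 ∧ u.sum + #(occ ∩ Ico (b + 1) (m + 1)) ≤ m - b := by
  induction h with
  | nil occ =>
    refine ⟨[], [], by simp, by simp, ?_, ?_⟩
    · simpa using card_le_card (inter_subset_right (s₁ := occ) (s₂ := Ico 1 b))
    · simpa using card_le_card (inter_subset_right (s₁ := occ) (s₂ := Ico (b + 1) (m + 1)))
  | cons occ pref len rest s hps _ ih =>
    obtain ⟨t, u, hsub, hsum, hL, hR⟩ :=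
      ih (fun c hc => hpref c (List.mem_cons_of_mem _ hc)) (mem_union_left _ hb)
    obtain ⟨⟨hps, hsm, hfree⟩, -⟩ := hps
    have hcard (I : Finset ℕ) :
        #((occ ∪ Ico s (s + len)) ∩ I) = #(occ ∩ I) + #(Ico s (s + len) ∩ I) := by
      rw [union_inter_distrib_right, card_union_of_disjoint
        ((disjoint_right.mpr hfree).mono inter_subset_left inter_subset_left)]
    rw [hcard, Ico_inter_Ico, Nat.card_Ico] at hL hR
    have hpref1 := hpref _ List.mem_cons_self
    have hbs : s + len ≤ b ∨ b < s := by
      by_contra! hbs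
      exact hfree b (by simp; omega) hb
    simp only [List.map_cons, List.sum_cons]
    rcases hbs with hleft | hright
    · exact ⟨len :: t, u, hsub.cons_cons _, by simp; omega, by simp at hL ⊢; omega, by omega⟩
    · exact ⟨t, len :: u, hsub.cons _, by simp; omega, by omega, by simp at hR ⊢; omega⟩

lemma PA.one_mem {y x : List ℕ} (hy : y ≠ []) (hpos : ∀ v ∈ y, 0 < v) (h : PA y x) : 1 ∈ x := by
  obtain ⟨hlen, hbd, hpark⟩ := h
  obtain ⟨c, hc, hc1⟩ := hpark.exists_pref_le
    ⟨empty_subset _, by simp [List.map_snd_zip hlen.ge]⟩ (t := 1)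
    (mem_Icc.mpr ⟨le_rfl, List.sum_pos y hpos hy⟩) (notMem_empty 1)
  have hcx := (List.of_mem_zip hc).1
  have := (hbd _ hcx).1
  exact (show c.1 = 1 by omega) ▸ hcx

lemma PAinv.exists_sublist_tail_of_mem {y x : List ℕ} (hpos : ∀ v ∈ y, 0 < v) (hinv : PAinv y x)
    {w : ℕ} (hw : w ∈ x) : ∃ t : List ℕ, t.Sublist y.tail ∧ w = 1 + t.sum := by
  obtain ⟨hlen, hbd, hpark⟩ := hinv _ (List.perm_cons_erase hw)
  obtain _ | ⟨y₁, ytail⟩ := y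
  · simp at hlen
  rw [List.zip_cons_cons] at hpark
  cases hpark with
  | cons _ _ _ _ s hps hrest =>
    obtain rfl := hps.eq_pref_of_empty
    have hsm := hps.1.2.1
    have hy₁ := hpos y₁ List.mem_cons_self
    obtain ⟨t, u, hsub, hsum, hL, hR⟩ := hrest.exists_split (b := s)
      (fun c hc => (hbd c.1 (List.mem_cons_of_mem _ (List.of_mem_zip hc).1)).1) (by simp; omega)
    rw [List.map_snd_zip (by simp at hlen; omega)] at hsub hsum
    rw [empty_union, Ico_inter_Ico, Nat.card_Ico] at hL hR
    simp only [List.sum_cons] at hsm hR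
    have hs1 := (hbd s List.mem_cons_self).1
    refine ⟨t, hsub, ?_⟩
    omega

def AllArrangementsPark (m : ℕ) (occ : Finset ℕ) (M lens : List ℕ) : Prop :=
  ∀ pr : List ℕ, pr.Perm M → Park m occ (pr.zip lens)

namespace AllArrangementsPark

variable {m ℓ : ℕ} {occ : Finset ℕ} {M lens : List ℕ}

lemma exists_parksAt (h : AllArrangementsPark m occ M (ℓ :: lens)) {v : ℕ} (hv : v ∈ M) :
    ∃ s, ParksAt occ m v ℓ s := by
  have hpark := h _ (List.perm_cons_erase hv).symm
  rw [List.zip_cons_cons] at hpark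
  cases hpark with
  | cons _ _ _ _ s hps _ => exact ⟨s, hps⟩

lemma erase (h : AllArrangementsPark m occ M (ℓ :: lens)) {v s : ℕ} (hv : v ∈ M)
    (hps : ParksAt occ m v ℓ s) : AllArrangementsPark m (occ ∪ Ico s (s + ℓ)) (M.erase v) lens := by
  intro pr hpr
  have hpark := h _ ((hpr.cons v).trans (List.perm_cons_erase hv).symm)
  rw [List.zip_cons_cons] at hpark
  cases hpark with
  | cons _ _ _ _ s' hps' hrest => rwa [hps'.unique hps] at hrest

lemma exists_le (h : AllArrangementsPark m occ M lens) (hfill : ExactFill m occ lens)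
    (hlen : M.length = lens.length) {t : ℕ} (ht : t ∈ Icc 1 m) (htocc : t ∉ occ) :
    ∃ v ∈ M, v ≤ t := by
  obtain ⟨c, hc, hct⟩ := (h M (List.Perm.refl M)).exists_pref_le
    (by rwa [List.map_snd_zip hlen.ge]) ht htocc
  exact ⟨c.1, (List.of_mem_zip hc).1, hct⟩

lemma exists_parksAt_one (h : AllArrangementsPark m occ M (ℓ :: lens))
    (hfill : ExactFill m occ (ℓ :: lens)) (hlen : M.length = lens.length + 1) (hℓ : 1 ≤ ℓ)
    (hM : ∀ v ∈ M, 1 ≤ v) : ∃ p, ParksAt occ m 1 ℓ p ∧ ∃ v ∈ M, v ≤ p := by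
  obtain ⟨v₀, hv₀⟩ := List.exists_mem_of_length_pos (by omega : 0 < M.length)
  obtain ⟨s₀, hs₀⟩ := h.exists_parksAt hv₀
  obtain ⟨p, hp⟩ := (hs₀.1.of_pref_le (hM v₀ hv₀)).exists_parksAt
  have ⟨⟨hp1, hpm, hfree⟩, _⟩ := hp
  exact ⟨p, hp, h.exists_le hfill hlen (by simp; omega) (hfree p (by simp; omega))⟩

end AllArrangementsPark

lemma List.exists_mem_le_erase {M : List ℕ} {p w : ℕ} (hp : ∃ v ∈ M, v ≤ p)
    (hw : w ∈ M ∨ ∀ v ∈ M, w ≤ v) :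
    ∃ v ∈ M, v ≤ p ∧ (w ∈ M.erase v ∨ ∀ u ∈ M.erase v, w ≤ u) := by
  classical
  have hex : ∃ v, v ∈ M := hp.imp fun _ => And.left
  refine ⟨Nat.find hex, Nat.find_spec hex, ?_, ?_⟩
  · obtain ⟨v, hv, hvp⟩ := hp
    exact (Nat.find_min' hex hv).trans hvp
  · rcases hw with hwM | hmin
    · by_cases hwv : w = Nat.find hex
      · exact Or.inr fun u hu => hwv ▸ Nat.find_min' hex (List.mem_of_mem_erase hu)
      · exact Or.inl ((List.mem_erase_of_ne hwv).mpr hwM)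
    · exact Or.inr fun u hu => hmin u (List.mem_of_mem_erase hu)

/-- `hLw` says that `L` is all `1`s apart from at most one entry `w`. -/
theorem AllArrangementsPark.park_of_forall_mem_erase_eq_one {m : ℕ} {occ : Finset ℕ}
    {M lens : List ℕ} (h : AllArrangementsPark m occ M lens) (hfill : ExactFill m occ lens)
    (hlen : M.length = lens.length) (hlens : ∀ ℓ ∈ lens, 1 ≤ ℓ) (hM : ∀ v ∈ M, 1 ≤ v) {w : ℕ}
    (hw : 1 ≤ w) (hwM : w ∈ M ∨ ∀ v ∈ M, w ≤ v) {L : List ℕ} (hL : L.length = lens.length)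
    (hLw : ∀ u ∈ L.erase w, u = 1) : Park m occ (L.zip lens) := by
  induction lens generalizing M occ w L with
  | nil => rw [List.zip_nil_right]; exact Park.nil _
  | cons ℓ lens ih =>
    obtain _ | ⟨u, L⟩ := L
    · simp at hL
    simp only [List.length_cons, Nat.add_right_cancel_iff] at hL hlen
    have hℓ := hlens ℓ List.mem_cons_self
    have hlens' := fun ℓ' hℓ' => hlens ℓ' (List.mem_cons_of_mem ℓ hℓ')
    have hlen' {v : ℕ} (hv : v ∈ M) : (M.erase v).length = lens.length := by
      rw [List.length_erase_of_mem hv]; omega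
    have hM' {v : ℕ} : ∀ u ∈ M.erase v, 1 ≤ u := fun u hu => hM u (List.mem_of_mem_erase hu)
    obtain ⟨p, hp, hle⟩ := h.exists_parksAt_one hfill hlen hℓ hM
    rw [List.zip_cons_cons]
    by_cases huw : u = w
    · subst huw
      obtain ⟨v, hvM, s, hvs, hus⟩ : ∃ v ∈ M, ∃ s, ParksAt occ m v ℓ s ∧ ParksAt occ m u ℓ s := by
        rcases hwM with huM | hmin
        · obtain ⟨s, hs⟩ := h.exists_parksAt huM
          exact ⟨u, huM, s, hs, hs⟩
        · obtain ⟨v, hvM, hvp⟩ := hle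
          exact ⟨v, hvM, p, hp.of_pref_le_of_le (hM v hvM) hvp,
            hp.of_pref_le_of_le hw ((hmin v hvM).trans hvp)⟩
      have hL1 : ∀ u' ∈ L, u' = 1 := by simpa using hLw
      exact Park.cons _ _ _ _ s hus (ih (h.erase hvM hvs) (hfill.step hvs.1 (hM v hvM))
        (hlen' hvM) hlens' hM' le_rfl (Or.inr hM') hL
        fun u' hu' => hL1 u' (List.erase_subset hu'))
    · have hLw' : ∀ u' ∈ u :: L.erase w, u' = 1 := by
        rwa [← List.erase_cons_tail (by simpa using huw)]
      obtain rfl := hLw' u List.mem_cons_self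
      obtain ⟨v, hvM, hvp, hwv⟩ := List.exists_mem_le_erase hle hwM
      have hvp' := hp.of_pref_le_of_le (hM v hvM) hvp
      exact Park.cons _ _ _ _ p hp (ih (h.erase hvM hvp') (hfill.step hvp'.1 (hM v hvM))
        (hlen' hvM) hlens' hM' hw hwv hL fun u' hu' => hLw' u' (List.mem_cons_of_mem _ hu'))

theorem PAinv.replicate_one_append_singleton {y x : List ℕ} (hy : y ≠ [])
    (hpos : ∀ v ∈ y, 0 < v) (hinv : PAinv y x) {w : ℕ} (hw : w ∈ x) :
    PAinv y (List.replicate (y.length - 1) 1 ++ [w]) := by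
  obtain ⟨hxlen, hbd, -⟩ := hinv x (List.Perm.refl x)
  have hylen : y.length ≠ 0 := by simpa using hy
  intro x' hx'
  have hx'w : x'.Perm (w :: List.replicate (y.length - 1) 1) :=
    hx'.symm.trans (List.perm_append_singleton _ _)
  refine ⟨by rw [hx'w.length_eq]; simp; omega, fun v hv => ?_, ?_⟩
  · rcases List.mem_cons.mp (hx'w.subset hv) with rfl | hv1
    · exact hbd v hw
    · rw [List.eq_of_mem_replicate hv1]
      exact ⟨le_rfl, List.sum_pos y hpos hy⟩
  · refine AllArrangementsPark.park_of_forall_mem_erase_eq_one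
      (fun pr hpr => (hinv pr hpr.symm).2.2) ⟨empty_subset _, by simp⟩ hxlen hpos
      (fun v hv => (hbd v hv).1) (hbd w hw).1 (Or.inl hw) (by rw [hx'w.length_eq]; simp; omega)
      fun u hu => ?_
    have hu' := (hx'w.erase w).subset hu
    rw [List.erase_cons_head] at hu'
    exact List.eq_of_mem_replicate hu'

lemma deg_le_length (x : List ℕ) : deg x ≤ x.length := List.length_filter_le _ _

lemma PAinv.deg_le_chi {y x : List ℕ} (hinv : PAinv y x) : deg x ≤ chi y :=
  le_csSup ⟨y.length, by
    rintro _ ⟨z, hz, rfl⟩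
    exact (deg_le_length z).trans (hz z (List.Perm.refl z)).1.le⟩ ⟨x, hinv, rfl⟩

lemma getD_eq_one_of_add_deg_lt :
    ∀ {x : List ℕ} {i : ℕ}, x.Pairwise (· ≤ ·) → (∀ v ∈ x, 1 ≤ v) → i + deg x < x.length →
      x.getD i 0 = 1
  | [], _, _, _, hi => by simp at hi
  | a :: t, 0, hs, h1, hi => by
    by_contra ha
    have ha2 : 2 ≤ a := by have := h1 a List.mem_cons_self; simp at ha; omega
    have hall : ∀ v ∈ a :: t, v ≠ 1 := by
      intro v hv
      rcases List.mem_cons.mp hv with rfl | hvt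
      · omega
      · have := List.rel_of_pairwise_cons hs hvt; omega
    have : deg (a :: t) = (a :: t).length := by
      simp only [deg]
      rw [List.filter_eq_self.mpr (by simpa using hall)]
    omega
  | a :: t, i + 1, hs, h1, hi => by
    have hdeg : deg t ≤ deg (a :: t) :=
      ((List.sublist_cons_self a t).filter _).length_le
    simp only [List.getD_cons_succ]
    exact getD_eq_one_of_add_deg_lt hs.of_cons (fun v hv => h1 v (List.mem_cons_of_mem a hv))
      (by simp at hi ⊢; omega)

lemma List.eq_one_cons_tail {x : List ℕ} (hs : x.Pairwise (· ≤ ·)) (h1 : ∀ v ∈ x, 1 ≤ v)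
    (hx : 1 ∈ x) : x = 1 :: x.tail := by
  obtain _ | ⟨a, t⟩ := x
  · simp at hx
  have ha1 : a ≤ 1 := by
    rcases List.mem_cons.mp hx with h | h
    · exact h.ge
    · exact List.rel_of_pairwise_cons hs h
  rw [List.tail_cons, le_antisymm ha1 (h1 a List.mem_cons_self)]

lemma ncard_le_choose_of_pairwise_le {α : Type*} [LinearOrder α] (V : Finset α) (k : ℕ)
    {S : Set (List α)}
    (hS : ∀ l ∈ S, l.length = k ∧ l.Pairwise (· ≤ ·) ∧ ∀ a ∈ l, a ∈ V) :
    S.ncard ≤ (#V + k - 1).choose k := by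
  classical
  let g : Sym V k → List α := fun s => (s.1.map Subtype.val).sort (· ≤ ·)
  have hsub : S ⊆ Set.range g := by
    intro l hl
    obtain ⟨hlen, hsort, hV⟩ := hS l hl
    lift l to List V using hV
    refine ⟨⟨l, by simpa using hlen⟩, ?_⟩
    simp only [g, Multiset.map_coe, Multiset.coe_sort]
    exact List.mergeSort_eq_self _ hsort
  calc S.ncard ≤ (Set.range g).ncard := Set.ncard_le_ncard hsub (Set.finite_range g)
    _ ≤ Nat.card (Sym V k) := by
      rw [← Nat.card_coe_set_eq]; exact Finite.card_range_le g
    _ = (#V + k - 1).choose k := by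
      rw [Nat.card_eq_fintype_card, Sym.card_sym_eq_choose, Fintype.card_coe]

lemma ncard_setOf_PAinv_pairwise_le {y : List ℕ} (hy : y ≠ []) (hpos : ∀ v ∈ y, 0 < v) :
    {x : List ℕ | PAinv y x ∧ x.Pairwise (· ≤ ·)}.ncard ≤
      (2 ^ (y.length - 1) + y.length - 2).choose (y.length - 1) := by
  classical
  let V : Finset ℕ := ((y.tail.sublists).map fun t => 1 + t.sum).toFinset
  have hV : #V ≤ 2 ^ (y.length - 1) := (List.toFinset_card_le _).trans (by simp)
  set S := {x : List ℕ | PAinv y x ∧ x.Pairwise (· ≤ ·)}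
  have hS : ∀ x ∈ S, x = 1 :: x.tail := fun x ⟨hinv, hsort⟩ =>
    have hPA := hinv x (List.Perm.refl x)
    List.eq_one_cons_tail hsort (fun v hv => (hPA.2.1 v hv).1) (hPA.one_mem hy hpos)
  have hinj : Set.InjOn List.tail S := fun x₁ hx₁ x₂ hx₂ h => by
    rw [hS x₁ hx₁, hS x₂ hx₂, h]
  have hylen : y.length ≠ 0 := by simpa using hy
  calc S.ncard = (List.tail '' S).ncard := hinj.ncard_image.symm
    _ ≤ (#V + (y.length - 1) - 1).choose (y.length - 1) := by
      refine ncard_le_choose_of_pairwise_le V _ ?_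
      rintro _ ⟨x, ⟨hinv, hsort⟩, rfl⟩
      refine ⟨by simp [(hinv x (List.Perm.refl x)).1], hsort.sublist (List.tail_sublist x),
        fun a ha => ?_⟩
      obtain ⟨t, ht, rfl⟩ := hinv.exists_sublist_tail_of_mem hpos (List.mem_of_mem_tail ha)
      simpa [V] using ⟨t, ht, rfl⟩
    _ ≤ _ := Nat.choose_le_choose _ (by omega)

/-- every `x ∈ PAinv↑_n(y)` lies in `{1}^{n−χ(y)} × W(y)^{χ(y)}`,
i.e. its first `n − χ(y)` entries equal 1 and its remaining entries lie in `W(y)`;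
in particular `|PAinv↑_n(y)| ≤ binom(2^{n−1} + n − 2, n − 1)`. -/
theorem stmt19 (n : ℕ) (hn : 0 < n) (y : List ℕ) (hylen : y.length = n)
    (hypos : ∀ v ∈ y, 0 < v) :
    (∀ x : List ℕ, PAinv y x → x.Pairwise (· ≤ ·) →
        (∀ i < n - chi y, x.getD i 0 = 1) ∧
        (∀ i, n - chi y ≤ i → i < n → x.getD i 0 ∈ Wset y)) ∧
      Set.ncard {x : List ℕ | PAinv y x ∧ x.Pairwise (· ≤ ·)} ≤
        (2 ^ (n - 1) + n - 2).choose (n - 1) := by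
  have hy : y ≠ [] := List.ne_nil_of_length_pos (hylen ▸ hn)
  refine ⟨fun x hinv hsort => ⟨fun i hi => ?_, fun i _ hi => ?_⟩,
    hylen ▸ ncard_setOf_PAinv_pairwise_le hy hypos⟩
  · obtain ⟨hxlen, hbd, -⟩ := hinv x (List.Perm.refl x)
    have := hinv.deg_le_chi
    exact getD_eq_one_of_add_deg_lt hsort (fun v hv => (hbd v hv).1) (by omega)
  · have hxlen := (hinv x (List.Perm.refl x)).1
    rw [List.getD_eq_getElem _ _ (by omega)]
    exact hinv.replicate_one_append_singleton hy hypos (List.getElem_mem _)
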